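/- Let (B_j) be a finite family of 2×2 complex matrices, let φ : Fin 2 × Fin 2 → ℂ be the Bell vector φ(i,j) = (if i = j then 1/√2 else 0), and set ρ = Σ_j (1 ⊗ₖ B_j)(φφ*)(1 ⊗ₖ B_j)†, a matrix indexed by Fin 2 × Fin 2 (systems a1 and b). Let A : Fin 2 → ℂ be any vector (system a2). Index the three-qubit system by triples (i,m,j) standing for (a1, b, a2), define the operator N := ρ_{a1 b} ⊗ (A A*)_{a2} with entries N((i,m,j),(i',m',j')) = ρ((i,m),(i',m')) · A j · conj(A j'), and for a 2×2 matrix σ define the Bell contraction C_σ(N) ∈ Matrix (Fin 2) (Fin 2) ℂ by C_σ(N)(m,m') = Σ_{i,j,i',j',i₀,i₀'} conj(φ(i,j)) · σ i i₀ · N((i₀,m,j),(i₀',m',j')) · conj(σ i' i₀') · φ(i',j'). Then Σ_{õ1,õ2 ∈ {0,1}} (X^{õ1} Z^{õ2}) · C_{X^{õ1}Z^{õ2}}(N) · (Z^{õ2} X^{õ1}) = (1/4) Σ_{õ1,õ2 ∈ {0,1}} Σ_j (X^{õ1} Z^{õ2} B_j X^{õ1} Z^{õ2}) (A A*) (X^{õ1}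 Z^{õ2} B_j X^{õ1} Z^{õ2})†. That is, teleporting the state A through the deviated Bell pair ρ, with the standard Pauli correction on system b summed over the four Bell outcomes, produces exactly the Pauli-twirled channel (1/4)Σ 𝒳^{õ1}𝒵^{õ2} ∘ 𝓕 ∘ 𝒳^{õ1}𝒵^{õ2} applied to AA*, where 𝓕(·) = Σ_j B_j (·) B_j†. -/
import Mathlib


open Matrix Kronecker

/-- The Pauli `X` matrix. -/
def pauliX : Matrix (Fin 2) (Fin 2) ℂ := !![0, 1; 1, 0]

/-- The Pauli `Z` matrix. -/
def pauliZ : Matrix (Fin 2) (Fin 2) ℂ := !![1, 0; 0, -1]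

/-- The Bell vector `|Φ⁺⟩ = (|00⟩ + |11⟩)/√2`. -/
noncomputable def bell : Fin 2 × Fin 2 → ℂ :=
  fun p => if p.1 = p.2 then 1 / (Real.sqrt 2 : ℂ) else 0

/-- The rank-one Bell projector `|Φ⁺⟩⟨Φ⁺|`. -/
noncomputable def bellProj : Matrix (Fin 2 × Fin 2) (Fin 2 × Fin 2) ℂ :=
  Matrix.of fun x y => bell x * (starRingEnd ℂ) (bell y)

/-- The deviated Bell pair `ρ = Σⱼ (1 ⊗ Bⱼ)|Φ⁺⟩⟨Φ⁺|(1 ⊗ Bⱼ)†` on systems `a₁, b`. -/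
noncomputable def devRho (n : ℕ) (B : Fin n → Matrix (Fin 2) (Fin 2) ℂ) :
    Matrix (Fin 2 × Fin 2) (Fin 2 × Fin 2) ℂ :=
  ∑ j, ((1 : Matrix (Fin 2) (Fin 2) ℂ) ⊗ₖ B j) * bellProj *
    ((1 : Matrix (Fin 2) (Fin 2) ℂ) ⊗ₖ B j)ᴴ

/-- The three-qubit operator `N = ρ_{a₁b} ⊗ (AA*)_{a₂}`, with index triples `(i,m,j)`
standing for systems `(a₁, b, a₂)`. -/
noncomputable def bigN (n : ℕ) (B : Fin n → Matrix (Fin 2) (Fin 2) ℂ) (A : Fin 2 → ℂ) :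
    Matrix (Fin 2 × Fin 2 × Fin 2) (Fin 2 × Fin 2 × Fin 2) ℂ :=
  Matrix.of fun x y =>
    devRho n B (x.1, x.2.1) (y.1, y.2.1) * A x.2.2 * (starRingEnd ℂ) (A y.2.2)

/-- The Bell contraction `C_σ(N) = ⟨Φ⁺|_{a₁a₂} (σ_{a₁} N σ_{a₁}†) |Φ⁺⟩_{a₁a₂}`
acting on system `b`. -/
noncomputable def bellContract (σ : Matrix (Fin 2) (Fin 2) ℂ)
    (N : Matrix (Fin 2 × Fin 2 × Fin 2) (Fin 2 × Fin 2 × Fin 2) ℂ) :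
    Matrix (Fin 2) (Fin 2) ℂ :=
  Matrix.of fun m m' =>
    ∑ i : Fin 2, ∑ j : Fin 2, ∑ i' : Fin 2, ∑ j' : Fin 2, ∑ i₀ : Fin 2, ∑ i₀' : Fin 2,
      (starRingEnd ℂ) (bell (i, j)) * σ i i₀ * N (i₀, m, j) (i₀', m', j') *
        (starRingEnd ℂ) (σ i' i₀') * bell (i', j')

/-- The outer product `AA*`. -/
noncomputable def outerA (A : Fin 2 → ℂ) : Matrix (Fin 2) (Fin 2) ℂ :=
  Matrix.of fun j j' => A j * (starRingEnd ℂ) (A j')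

set_option maxHeartbeats 4000000 in
/-- Teleporting the state `A` through the deviated Bell pair, with the standard Pauli
correction on system `b` summed over the four Bell outcomes, produces exactly the
Pauli-twirled channel applied to `AA*`. -/
theorem teleportation_pushes_deviation_forward
    (n : ℕ) (B : Fin n → Matrix (Fin 2) (Fin 2) ℂ) (A : Fin 2 → ℂ) :
    ∑ o1 : Fin 2, ∑ o2 : Fin 2,
      (pauliX ^ (o1 : ℕ) * pauliZ ^ (o2 : ℕ)) *
        bellContract (pauliX ^ (o1 : ℕ) * pauliZ ^ (o2 : ℕ)) (bigN n B A) *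
        (pauliZ ^ (o2 : ℕ) * pauliX ^ (o1 : ℕ))
    = (1 / 4 : ℂ) • ∑ o1 : Fin 2, ∑ o2 : Fin 2, ∑ j,
        (pauliX ^ (o1 : ℕ) * pauliZ ^ (o2 : ℕ) * B j *
            pauliX ^ (o1 : ℕ) * pauliZ ^ (o2 : ℕ)) * outerA A *
          (pauliX ^ (o1 : ℕ) * pauliZ ^ (o2 : ℕ) * B j *
            pauliX ^ (o1 : ℕ) * pauliZ ^ (o2 : ℕ))ᴴ := by
  have hc2 : (1 / ((Real.sqrt 2 : ℝ) : ℂ)) * (1 / ((Real.sqrt 2 : ℝ) : ℂ)) = 1/2 := by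
    rw [div_mul_div_comm, one_mul, ← Complex.ofReal_mul, Real.mul_self_sqrt (by norm_num)]
    norm_num
  have hconj : star (1 / ((Real.sqrt 2 : ℝ) : ℂ)) = 1 / ((Real.sqrt 2 : ℝ) : ℂ) := by
    simp [← starRingEnd_apply, Complex.conj_ofReal]
  ext m m'
  simp only [Fin.sum_univ_two, Fin.isValue, Fin.val_zero, Fin.val_one, pow_zero, pow_one,
    Matrix.one_mul, Matrix.mul_one, Matrix.smul_apply, Matrix.add_apply, Matrix.sum_apply,
    Matrix.mul_apply, bellContract, bigN, devRho, bellProj, outerA, bell,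
    Matrix.of_apply, Matrix.conjTranspose_apply, Matrix.kroneckerMap_apply, Matrix.one_apply,
    Fintype.sum_prod_type, smul_eq_mul, pauliX, pauliZ, Matrix.cons_val', Matrix.cons_val_zero,
    Matrix.cons_val_one, Matrix.head_cons, Matrix.empty_val', Matrix.cons_val_fin_one,
    Matrix.head_fin_const, starRingEnd_apply, star_one, star_zero, star_neg]
  simp only [if_true, star_one, star_mul', one_mul, mul_one, mul_zero, zero_mul, add_zero,
    zero_add, show ((0:Fin 2) = 1) = False by simp, show ((1:Fin 2) = 0) = False by simp,
    if_false, map_zero, star_zero, hconj, _root_.map_mul]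
  generalize hc : (1 / ((Real.sqrt 2 : ℝ) : ℂ)) = c at hc2 hconj ⊢
  have hc4 : c^4 = 1/4 := by rw [show c^4 = (c*c)*(c*c) by ring, hc2]; norm_num
  fin_cases m <;> fin_cases m' <;>
    simp only [show ((0:Fin 2) = 1) = False by simp, show ((1:Fin 2) = 0) = False by simp,
      if_false, if_true, one_mul, mul_one, mul_zero, zero_mul, add_zero, zero_add, neg_mul,
      mul_neg, neg_neg, eq_self_iff_true] <;>
    simp only [Finset.mul_sum, Finset.sum_mul, neg_mul, mul_neg, ← Finset.sum_neg_distrib,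
      ← Finset.sum_add_distrib] <;>
    refine Finset.sum_congr rfl fun j _ => ?_ <;>
    simp only [hconj, star_neg, star_one, star_add, star_mul', star_zero, Matrix.cons_val',
      Matrix.cons_val_zero, Matrix.cons_val_one, Matrix.head_cons, Matrix.empty_val',
      Matrix.cons_val_fin_one, Matrix.head_fin_const, Fin.mk_zero, Fin.mk_one, if_true, if_false,
      show ((0:Fin 2) = 1) = False by simp, show ((1:Fin 2) = 0) = False by simp,
      eq_self_iff_true, one_mul, mul_one, mul_zero, zero_mul, add_zero, zero_add, neg_mul,
      mul_neg, neg_neg] <;>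
    ring_nf <;>
    rw [hc4] <;>
    ring
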